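/- Let E^1, E^0 be locally compact Hausdorff spaces, s : E^1 → E^0 a local homeomorphism, and C a C*-algebra. For ξ, η continuous compactly supported functions from E^1 to C, the function v ↦ Σ_{e ∈ s⁻¹(v)} ξ(e)* η(e) on E^0 is well-defined (the sum is finite for each v) and is a continuous compactly supported function from E^0 to C. -/

import Mathlib

/-!
Near a point `v₀`, the fibre of `s` over `v₀` meets the compact set `tsupport g` in finitely many
points. Give them pairwise disjoint chart neighbourhoods; for `v` close to `v₀` every point of the
fibre over `v` in `tsupport g` lies in one of these charts, because `s` maps the rest of
`tsupport g` onto a compact set missing `v₀`. So near `v₀` the fibre sum is the finite sum of `g`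
composed with the local inverses of `s`, hence continuous; and it vanishes off `s '' tsupport g`.
-/

open Set Function Filter Topology

theorem IsLocallyInjective.finite_preimage_singleton_inter {X Y : Type*} [TopologicalSpace X]
    {f : X → Y} (hf : IsLocallyInjective f) {K : Set X} (hK : IsCompact K) (y : Y) :
    (f ⁻¹' {y} ∩ K).Finite := by
  choose U hU_open hU_mem hU_inj using hf
  obtain ⟨b, -, hb, hKb⟩ := hK.elim_finite_subcover_image (b := univ) (fun x _ => hU_open x)
    fun x _ => mem_biUnion (mem_univ x) (hU_mem x)
  have hsub : ∀ x, (f ⁻¹' {y} ∩ U x).Subsingleton := fun x _ ha _ hc =>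
    hU_inj x ha.2 hc.2 (ha.1.trans hc.1.symm)
  refine (hb.biUnion fun x _ => (hsub x).finite).subset fun e ⟨he, heK⟩ => ?_
  obtain ⟨x, hx, hex⟩ := mem_iUnion₂.1 (hKb heK)
  exact mem_biUnion hx ⟨he, hex⟩

section FiberSum

variable {E1 E0 M : Type*} [AddCommMonoid M] {s : E1 → E0} {g : E1 → M}

theorem PartialEquiv.preimage_singleton_inter_source {f : E1 → E0} (e : PartialEquiv E1 E0)
    (he : ⇑e = f) {v : E0} (hv : v ∈ e.target) : f ⁻¹' {v} ∩ e.source = {e.symm v} := by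
  rw [← he, inter_comm, ← e.symm_image_eq_source_inter_preimage (singleton_subset_iff.2 hv),
    image_singleton]

theorem finsum_mem_preimage_singleton_eq_sum_symm {ι : Type*} {S : Finset ι}
    {φ : ι → PartialEquiv E1 E0} (hφ : ∀ i ∈ S, ⇑(φ i) = s)
    (hdisj : (S : Set ι).PairwiseDisjoint fun i => (φ i).source) {v : E0}
    (hv : ∀ i ∈ S, v ∈ (φ i).target) (hcover : s ⁻¹' {v} ∩ support g ⊆ ⋃ i ∈ S, (φ i).source) :
    ∑ᶠ e ∈ s ⁻¹' {v}, g e = ∑ i ∈ S, g ((φ i).symm v) := by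
  have hfiber : ∀ i ∈ S, s ⁻¹' {v} ∩ (φ i).source = {(φ i).symm v} := fun i hi =>
    (φ i).preimage_singleton_inter_source (hφ i hi) (hv i hi)
  calc ∑ᶠ e ∈ s ⁻¹' {v}, g e = ∑ᶠ e ∈ ⋃ i ∈ S, s ⁻¹' {v} ∩ (φ i).source, g e := by
        refine finsum_mem_inter_support_eq g _ _ ?_
        rw [← inter_iUnion₂, inter_right_comm, inter_eq_left.2 hcover]
    _ = ∑ᶠ i ∈ (S : Set ι), ∑ᶠ e ∈ s ⁻¹' {v} ∩ (φ i).source, g e :=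
        finsum_mem_biUnion (hdisj.mono fun _ => inter_subset_right) S.finite_toSet
          fun i hi => (hfiber i hi).symm ▸ finite_singleton _
    _ = ∑ i ∈ S, g ((φ i).symm v) := by
        rw [finsum_mem_coe_finset]
        exact Finset.sum_congr rfl fun i hi => by rw [hfiber i hi, finsum_mem_singleton]

variable [TopologicalSpace E1] [TopologicalSpace E0]

theorem IsLocalHomeomorph.exists_eventuallyEq_finsum_preimage_singleton [T2Space E1] [T2Space E0]
    (hs : IsLocalHomeomorph s) (hgc : HasCompactSupport g) (v₀ : E0) :
    ∃ (S : Finset E1) (φ : E1 → OpenPartialHomeomorph E1 E0), (∀ x ∈ S, v₀ ∈ (φ x).target) ∧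
      (fun v => ∑ᶠ e ∈ s ⁻¹' {v}, g e) =ᶠ[𝓝 v₀] fun v => ∑ x ∈ S, g ((φ x).symm v) := by
  have hS₀ := hs.isLocallyInjective.finite_preimage_singleton_inter hgc v₀
  set S₀ := s ⁻¹' {v₀} ∩ tsupport g
  have hs_cont := hs.continuous
  obtain ⟨U, hU, hUdisj⟩ := hS₀.t2_separation
  choose φ hφ_mem hφ_eq using hs
  set ψ : E1 → OpenPartialHomeomorph E1 E0 := fun x => (φ x).restrOpen (U x) (hU x).2
  have hψ_source : ∀ x, (ψ x).source = (φ x).source ∩ U x := fun x =>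
    (φ x).restrOpen_source (U x) (hU x).2
  have hψ_mem : ∀ x, x ∈ (ψ x).source := fun x => (hψ_source x).symm ▸ ⟨hφ_mem x, (hU x).1⟩
  have hψ_target : ∀ x ∈ S₀, v₀ ∈ (ψ x).target := fun x hx =>
    hx.1 ▸ hφ_eq x ▸ (ψ x).map_source (hψ_mem x)
  set A := tsupport g \ ⋃ x ∈ S₀, (ψ x).source
  have hA : IsCompact A := hgc.diff (isOpen_biUnion fun x _ => (ψ x).open_source)
  have hv₀A : v₀ ∉ s '' A := fun ⟨a, ⟨haK, haU⟩, hav⟩ =>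
    haU (mem_biUnion ⟨hav, haK⟩ (hψ_mem a))
  have hnear : ∀ᶠ v in 𝓝 v₀, (∀ x ∈ S₀, v ∈ (ψ x).target) ∧ v ∉ s '' A :=
    ((eventually_all_finite hS₀).2 fun x hx => (ψ x).open_target.mem_nhds (hψ_target x hx)).and
      ((hA.image hs_cont).isClosed.isOpen_compl.mem_nhds hv₀A)
  refine ⟨hS₀.toFinset, ψ, fun x hx => hψ_target x (hS₀.mem_toFinset.1 hx), ?_⟩
  filter_upwards [hnear] with v ⟨hv, hvA⟩
  refine finsum_mem_preimage_singleton_eq_sum_symm (φ := fun x => (ψ x).toPartialEquiv)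
    (fun x _ => (hφ_eq x).symm) ?_ (fun x hx => hv x (hS₀.mem_toFinset.1 hx)) ?_
  · rw [hS₀.coe_toFinset]
    exact hUdisj.mono fun x => (hψ_source x).trans_subset inter_subset_right
  · rintro e ⟨he, heg⟩
    by_contra h
    simp only [Finite.mem_toFinset] at h
    exact hvA ⟨e, ⟨subset_tsupport g heg, h⟩, he⟩

theorem IsLocalHomeomorph.continuous_finsum_preimage_singleton [T2Space E1] [T2Space E0]
    [TopologicalSpace M] [ContinuousAdd M] (hs : IsLocalHomeomorph s) (hg : Continuous g)
    (hgc : HasCompactSupport g) : Continuous fun v => ∑ᶠ e ∈ s ⁻¹' {v}, g e := by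
  refine continuous_iff_continuousAt.2 fun v₀ => ?_
  obtain ⟨S, φ, hv₀, heq⟩ := hs.exists_eventuallyEq_finsum_preimage_singleton hgc v₀
  refine ContinuousAt.congr ?_ heq.symm
  exact tendsto_finsetSum S fun x hx => hg.continuousAt.comp ((φ x).continuousAt_symm (hv₀ x hx))

theorem HasCompactSupport.finsum_preimage_singleton [R1Space E0] (hgc : HasCompactSupport g)
    (hs : Continuous s) : HasCompactSupport fun v => ∑ᶠ e ∈ s ⁻¹' {v}, g e := by
  refine HasCompactSupport.intro (hgc.image hs) fun v hv => finsum_mem_of_eqOn_zero fun e he => ?_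
  by_contra h
  exact hv ⟨e, subset_tsupport g h, he⟩

end FiberSum

theorem fiber_sum_continuous_compactly_supported_general {E1 E0 C : Type*}
    [TopologicalSpace E1] [TopologicalSpace E0]
    [T2Space E1] [T2Space E0]
    [NormedRing C] [StarRing C] [CStarRing C]
    (s : E1 → E0) (hs : IsLocalHomeomorph s)
    (ξ η : E1 → C) (hξ : Continuous ξ) (hξc : HasCompactSupport ξ)
    (hη : Continuous η) :
    (∀ v : E0, {e : E1 | s e = v ∧ star (ξ e) * η e ≠ 0}.Finite) ∧
    Continuous (fun v : E0 => ∑ᶠ e ∈ s ⁻¹' {v}, star (ξ e) * η e) ∧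
    HasCompactSupport (fun v : E0 => ∑ᶠ e ∈ s ⁻¹' {v}, star (ξ e) * η e) := by
  have hgc : HasCompactSupport fun e => star (ξ e) * η e := (hξc.comp_left (star_zero _)).mul_right
  refine ⟨fun v => ?_, hs.continuous_finsum_preimage_singleton (by fun_prop) hgc,
    hgc.finsum_preimage_singleton hs.continuous⟩
  exact (hs.isLocallyInjective.finite_preimage_singleton_inter hgc v).subset
    fun e he => ⟨he.1, subset_tsupport _ he.2⟩

/-- For a local homeomorphism `s : E¹ → E⁰` between locally compact Hausdorff spaces, a
C*-algebra `C`, and continuous compactly supported `ξ, η : E¹ → C`, the fiberwise sum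
`v ↦ Σ_{s e = v} (ξ e)* (η e)` has finitely many nonzero terms for each `v`, and defines
a continuous compactly supported function `E⁰ → C`. -/
theorem fiber_sum_continuous_compactly_supported {E1 E0 C : Type*}
    [TopologicalSpace E1] [TopologicalSpace E0]
    [LocallyCompactSpace E1] [T2Space E1] [LocallyCompactSpace E0] [T2Space E0]
    [NormedRing C] [StarRing C] [CStarRing C] [CompleteSpace C]
    [NormedAlgebra ℂ C] [StarModule ℂ C]
    (s : E1 → E0) (hs : IsLocalHomeomorph s)
    (ξ η : E1 → C) (hξ : Continuous ξ) (hξc : HasCompactSupport ξ)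
    (hη : Continuous η) (hηc : HasCompactSupport η) :
    (∀ v : E0, {e : E1 | s e = v ∧ star (ξ e) * η e ≠ 0}.Finite) ∧
    Continuous (fun v : E0 => ∑ᶠ e ∈ s ⁻¹' {v}, star (ξ e) * η e) ∧
    HasCompactSupport (fun v : E0 => ∑ᶠ e ∈ s ⁻¹' {v}, star (ξ e) * η e) :=
  fiber_sum_continuous_compactly_supported_general s hs ξ η hξ hξc hη
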